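/- arXiv:math/0512656 — 4 statements merged into one kernel-verified Lean document; each statement's English description precedes it below -/
import Mathlib

section
/- Fix an integer r > 0 and a natural number m. An element b ∈ 𝒜_m is a least element of 𝒜_m with respect to ≼ (meaning b ≼ c for every c ∈ 𝒜_m) if and only if dim b = m and b i = 2 for every i ∈ ℕ with i + r ≤ m. -/
/-- the set 𝒜 of sequences: `a 0 > 0` and whenever `a n ≤ 1`, `a i = 0` for all `i > n`. -/
def MemA (a : ℕ → ℕ) : Prop :=
  0 < a 0 ∧ ∀ n : ℕ, a n ≤ 1 → ∀ i : ℕ, n < i → a i = 0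

/-- `dim a = sup {n | a n > 0}` in `ℕ∞`. -/
noncomputable def dimA (a : ℕ → ℕ) : ℕ∞ :=
  ⨆ n ∈ {n : ℕ | 0 < a n}, (n : ℕ∞)

/-- the relation `≼` depending on a positive integer `r`:
`a ≼ b` iff `dim a ≤ dim b` and for all `n`, `a n > b n` implies `dim a < n + r`. -/
noncomputable def PreA (r : ℕ) (a b : ℕ → ℕ) : Prop :=
  dimA a ≤ dimA b ∧ ∀ n : ℕ, b n < a n → dimA a < (n : ℕ∞) + (r : ℕ∞)

lemma dimA_le {a : ℕ → ℕ} {n : ℕ} (h : ∀ i, n < i → a i = 0) : dimA a ≤ (n : ℕ∞) := by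
  refine iSup₂_le fun k hk => ?_
  have hkn : k ≤ n := by
    by_contra hc
    push_neg at hc
    have := h k hc
    simp [Set.mem_setOf_eq, this] at hk
  exact_mod_cast hkn

lemma le_dimA {a : ℕ → ℕ} {n : ℕ} (h : 0 < a n) : (n : ℕ∞) ≤ dimA a :=
  le_iSup₂ (f := fun (k : ℕ) (_ : k ∈ {n : ℕ | 0 < a n}) => (k : ℕ∞)) n h

/-- for `m : ℕ`, `b ∈ 𝒜_m` is a least element of `𝒜_m` iff
`dim b = m` and `b i = 2` for all `i` with `i + r ≤ m`. -/
theorem least_Am_iff (r : ℕ) (hr : 0 < r) (m : ℕ) (b : ℕ → ℕ)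
    (hb : MemA b) (hbm : (m : ℕ∞) ≤ dimA b) :
    (∀ c : ℕ → ℕ, MemA c → (m : ℕ∞) ≤ dimA c → PreA r b c) ↔
      (dimA b = (m : ℕ∞) ∧ ∀ i : ℕ, i + r ≤ m → b i = 2) := by
  constructor
  · intro hle
    set c : ℕ → ℕ := fun n => if n ≤ m then 2 else 0 with hc
    have hcA : MemA c := by
      constructor
      · simp [hc]
      · intro n hn i hi
        simp only [hc] at hn ⊢
        split at hn
        · omega
        · rw [if_neg]; omega
    have hcdim_le : dimA c ≤ (m : ℕ∞) := dimA_le (fun i hi => by simp [hc]; omega)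
    have hcdim_ge : (m : ℕ∞) ≤ dimA c := le_dimA (by simp [hc])
    have hpre := hle c hcA hcdim_ge
    have hdimb : dimA b = (m : ℕ∞) := le_antisymm (hpre.1.trans hcdim_le) hbm
    refine ⟨hdimb, fun i hir => ?_⟩
    have h2 : b i ≤ 2 := by
      by_contra hgt
      push_neg at hgt
      have hci : c i < b i := by simp only [hc]; rw [if_pos (by omega)]; omega
      have hlt := hpre.2 i hci
      rw [hdimb] at hlt
      have : (m : ℕ∞) < ((i + r : ℕ) : ℕ∞) := by push_cast; exact hlt
      have : m < i + r := by exact_mod_cast this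
      omega
    have h1 : 2 ≤ b i := by
      by_contra hl
      push_neg at hl
      have : dimA b ≤ (i : ℕ∞) := dimA_le (hb.2 i (by omega))
      rw [hdimb] at this
      have : m ≤ i := by exact_mod_cast this
      omega
    omega
  · rintro ⟨hdim, h2⟩ c hcA hcm
    refine ⟨hdim.le.trans hcm, fun n hn => ?_⟩
    rw [hdim]
    by_contra hlt
    push_neg at hlt
    have hnr : n + r ≤ m := by
      have : ((n + r : ℕ) : ℕ∞) ≤ (m : ℕ∞) := by push_cast; exact hlt
      exact_mod_cast this
    have hbn := h2 n hnr
    have hcn : c n ≤ 1 := by omega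
    have hdc : dimA c ≤ (n : ℕ∞) := dimA_le (hcA.2 n hcn)
    have : (m : ℕ∞) ≤ (n : ℕ∞) := hcm.trans hdc
    have : m ≤ n := by exact_mod_cast this
    omega
end

section
/- Fix an integer r > 0 and let Λ be a left artinian ring. The following are equivalent: (b) for every simple Λ-module S, every left artinian ring Γ, every nonzero finitely generated Γ-module T, and all minimal projective resolutions (Pₙ, dₙ) of S over Λ and (Qₙ, dₙ) of T over Γ, if sup {n | Pₙ ≠ 0} ≤ sup {n | Qₙ ≠ 0} (in ℕ∞), then for every n ∈ ℕ, ℓ(Pₙ) > ℓ(Qₙ) implies sup {n | Pₙ ≠ 0} < n + r (in ℕ∞); (c) every simple Λ-module S satisfies either sup {n | Pₙ ≠ 0} < r or ℓ(P₀) = 2, where (Pₙ, dₙ) is any minimal projective resolution of S. -/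
/-- rad X = (Jacobson radical of Λ) • X -/
def ModuleRad (Λ : Type) [Ring Λ] (X : Type) [AddCommGroup X] [Module Λ X] :
    Submodule Λ X :=
  Submodule.span Λ {z : X | ∃ r ∈ Ideal.jacobson (⊥ : Ideal Λ), ∃ x : X, z = r • x}

/-- composition length of a module, as the supremum of lengths of strictly
increasing chains of submodules from `⊥` to `⊤`. -/
noncomputable def ModuleLength (Λ : Type) [Ring Λ] (X : Type) [AddCommGroup X]
    [Module Λ X] : ℕ∞ :=
  ⨆ n ∈ {n : ℕ | ∃ c : Fin (n + 1) → Submodule Λ X,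
      StrictMono c ∧ c 0 = ⊥ ∧ c (Fin.last n) = ⊤}, (n : ℕ∞)

/-- a nonzero module that is not an internal direct sum of two nonzero submodules -/
def IndecomposableModule (Λ : Type) [Ring Λ] (X : Type) [AddCommGroup X]
    [Module Λ X] : Prop :=
  (∃ x : X, x ≠ 0) ∧
    ¬ ∃ A B : Submodule Λ X, A ≠ ⊥ ∧ B ≠ ⊥ ∧ IsCompl A B

/-- a minimal projective resolution of `M` -/
structure MinProjRes (Λ : Type) [Ring Λ] (M : Type) [AddCommGroup M] [Module Λ M] where
  P : ℕ → Type
  acg : ∀ n, AddCommGroup (P n)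
  mod : ∀ n, Module Λ (P n)
  proj : ∀ n, Module.Projective Λ (P n)
  fg : ∀ n, Module.Finite Λ (P n)
  d0 : P 0 →ₗ[Λ] M
  d : ∀ n, P (n + 1) →ₗ[Λ] P n
  surj : Function.Surjective d0
  exact0 : LinearMap.range (d 0) = LinearMap.ker d0
  exact : ∀ n, LinearMap.range (d (n + 1)) = LinearMap.ker (d n)
  min0 : LinearMap.ker d0 ≤ ModuleRad Λ (P 0)
  min : ∀ n, LinearMap.ker (d n) ≤ ModuleRad Λ (P (n + 1))

attribute [instance] MinProjRes.acg MinProjRes.mod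

/-- the projective dimension read off from a minimal projective resolution:
`sup {n | Pₙ ≠ 0}` in `ℕ∞` -/
noncomputable def MinProjRes.pd {Λ : Type} [Ring Λ] {M : Type} [AddCommGroup M]
    [Module Λ M] (res : MinProjRes Λ M) : ℕ∞ :=
  ⨆ n ∈ {n : ℕ | ∃ x : res.P n, x ≠ 0}, (n : ℕ∞)

/-- Condition (F) -/
def ConditionF (Λ : Type) [Ring Λ] : Prop :=
  ∀ (P : Type) [AddCommGroup P] [Module Λ P],
    Module.Finite Λ P → Module.Projective Λ P → IndecomposableModule Λ P →
      (Module.Projective Λ ↥(ModuleRad Λ P) ∨ IsSimpleModule Λ ↥(ModuleRad Λ P))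

/-!
(c) ⇒ (b) is an induction on `n`. If `ℓ(P₀) = 2`, the first syzygy `ker d₀` of a simple module
is zero or simple, and dropping `P₀` and `Q₀` turns the data for `n + 1` into data for `n` while
keeping `pd S ≤ pd T`. For `n = 0`, `ℓ(Q₀) < 2` forces `rad Q₀ = 0` by Nakayama, so minimality
makes `Q₀ → T` injective and `pd T = 0`.

(b) ⇒ (c): compare with the periodic minimal resolution `⋯ →2 ℤ/4 →2 ℤ/4 → ℤ/2 → 0`, which has
infinite projective dimension and `ℓ(Q₀) = 2`. Unless `pd S < r`, the case `n = 0` of (b) gives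
`ℓ(P₀) ≤ 2`, and `ℓ(P₀) ≥ 2` since `P₀ → S` is not injective (otherwise `pd S = 0`).
-/

section ModuleRad

variable {Λ : Type} [Ring Λ] {X : Type} [AddCommGroup X] [Module Λ X]

lemma moduleRad_eq_jacobson_smul_top : ModuleRad Λ X = Ring.jacobson Λ • ⊤ := by
  rw [← Ideal.jacobson_bot]
  apply le_antisymm
  · rw [ModuleRad, Submodule.span_le]
    rintro _ ⟨r, hr, x, rfl⟩
    exact Submodule.smul_mem_smul hr trivial
  · exact Submodule.smul_le.2 fun r hr x _ => Submodule.subset_span ⟨r, hr, x, rfl⟩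

lemma subsingleton_of_top_le_moduleRad [Module.Finite Λ X] (h : ⊤ ≤ ModuleRad Λ X) :
    Subsingleton X := by
  rw [moduleRad_eq_jacobson_smul_top] at h
  have := Submodule.FG.eq_bot_of_le_jacobson_smul Module.Finite.fg_top h
  exact (Submodule.subsingleton_iff Λ).1 (subsingleton_iff_bot_eq_top.1 this.symm)

end ModuleRad

section ModuleLength

variable {Λ : Type} [Ring Λ] {X : Type} [AddCommGroup X] [Module Λ X]

lemma le_moduleLength {n : ℕ} (c : Fin (n + 1) → Submodule Λ X) (hc : StrictMono c)
    (h0 : c 0 = ⊥) (hn : c (Fin.last n) = ⊤) : (n : ℕ∞) ≤ ModuleLength Λ X :=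
  le_biSup _ ⟨c, hc, h0, hn⟩

lemma two_le_moduleLength {N : Submodule Λ X} (h0 : ⊥ < N) (h1 : N < ⊤) :
    2 ≤ ModuleLength Λ X :=
  le_moduleLength ![⊥, N, ⊤] (by simp [h0, h1]) rfl rfl

lemma isAtom_of_moduleLength_le_two (h : ModuleLength Λ X ≤ 2) {N : Submodule Λ X}
    (h0 : N ≠ ⊥) (h1 : N ≠ ⊤) : IsAtom N := by
  refine ⟨h0, fun M hMN => ?_⟩
  by_contra hM
  have h3 : 3 ≤ ModuleLength Λ X := le_moduleLength ![⊥, M, N, ⊤]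
    (by simp [bot_lt_iff_ne_bot.2 hM, hMN, lt_top_iff_ne_top.2 h1]) rfl rfl
  exact absurd (h3.trans h) (by norm_num)

lemma moduleLength_le_of_surjective {k : ℕ} (f : Fin (k + 1) → Submodule Λ X)
    (hf : Function.Surjective f) : ModuleLength Λ X ≤ k :=
  iSup₂_le fun _ ⟨_, hc, _, _⟩ => Nat.cast_le.2 <| Nat.succ_le_succ_iff.1 <|
    Fin.le_of_injective _ ((Function.injective_surjInv hf).comp hc.injective)

lemma moduleRad_eq_bot_of_moduleLength_lt_two [Module.Finite Λ X]
    (h : ModuleLength Λ X < 2) : ModuleRad Λ X = ⊥ := by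
  by_contra hne
  by_cases htop : ModuleRad Λ X = ⊤
  · have := subsingleton_of_top_le_moduleRad htop.ge
    exact hne (Subsingleton.elim _ _)
  · exact (two_le_moduleLength (bot_lt_iff_ne_bot.2 hne) (lt_top_iff_ne_top.2 htop)).not_gt h

end ModuleLength

namespace MinProjRes

variable {Λ : Type} [Ring Λ] {M : Type} [AddCommGroup M] [Module Λ M] (res : MinProjRes Λ M)

lemma le_pd {n : ℕ} (h : ∃ x : res.P n, x ≠ 0) : (n : ℕ∞) ≤ res.pd :=
  le_biSup _ h

lemma subsingleton_succ {n : ℕ} [Subsingleton (res.P n)] : Subsingleton (res.P (n + 1)) :=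
  haveI := res.fg (n + 1)
  subsingleton_of_top_le_moduleRad <|
    (LinearMap.ker_eq_top.2 (Subsingleton.elim _ _)).ge.trans (res.min n)

lemma subsingleton_of_le {k n : ℕ} (hkn : k ≤ n) [Subsingleton (res.P k)] :
    Subsingleton (res.P n) := by
  induction n, hkn using Nat.le_induction with
  | base => assumption
  | succ n _ ih => exact res.subsingleton_succ

lemma pd_le_of_subsingleton {n : ℕ} [Subsingleton (res.P (n + 1))] : res.pd ≤ n := by
  refine iSup₂_le fun k ⟨x, hx⟩ => Nat.cast_le.2 (not_lt.1 fun hnk => hx ?_)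
  have := res.subsingleton_of_le hnk
  exact Subsingleton.elim _ _

lemma pd_le_zero_of_ker_eq_bot (h : LinearMap.ker res.d0 = ⊥) : res.pd ≤ 0 := by
  have hd : res.d 0 = 0 := LinearMap.range_eq_bot.1 (res.exact0.trans h)
  have := res.fg 1
  have : Subsingleton (res.P 1) := subsingleton_of_top_le_moduleRad <| by
    simpa only [hd, LinearMap.ker_zero] using res.min 0
  exact_mod_cast res.pd_le_of_subsingleton (n := 0)

lemma pd_le_zero_of_moduleLength_lt_two (h : ModuleLength Λ (res.P 0) < 2) : res.pd ≤ 0 :=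
  haveI := res.fg 0
  res.pd_le_zero_of_ker_eq_bot <| le_bot_iff.1 <|
    moduleRad_eq_bot_of_moduleLength_lt_two h ▸ res.min0

lemma ker_d0_ne_top [Nontrivial M] : LinearMap.ker res.d0 ≠ ⊤ := by
  rw [Ne, LinearMap.ker_eq_top]
  rintro h
  obtain ⟨x, hx⟩ := exists_ne (0 : M)
  obtain ⟨y, rfl⟩ := res.surj x
  exact hx (by rw [h, LinearMap.zero_apply])

lemma isSimpleModule_ker_d0 [Nontrivial M] (h2 : ModuleLength Λ (res.P 0) ≤ 2)
    (h : LinearMap.ker res.d0 ≠ ⊥) : IsSimpleModule Λ (LinearMap.ker res.d0) :=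
  isSimpleModule_iff_isAtom.2 (isAtom_of_moduleLength_le_two h2 h res.ker_d0_ne_top)

lemma two_le_moduleLength_P_zero [Nontrivial M] (h : LinearMap.ker res.d0 ≠ ⊥) :
    2 ≤ ModuleLength Λ (res.P 0) :=
  two_le_moduleLength (bot_lt_iff_ne_bot.2 h) (lt_top_iff_ne_top.2 res.ker_d0_ne_top)

noncomputable def shift : MinProjRes Λ (LinearMap.ker res.d0) where
  P n := res.P (n + 1)
  acg n := res.acg (n + 1)
  mod n := res.mod (n + 1)
  proj n := res.proj (n + 1)
  fg n := res.fg (n + 1)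
  d0 := (res.d 0).codRestrict (LinearMap.ker res.d0)
    (fun x => res.exact0 ▸ LinearMap.mem_range_self _ x)
  d n := res.d (n + 1)
  surj := by
    rintro ⟨y, hy⟩
    rw [← res.exact0] at hy
    obtain ⟨x, hx⟩ := hy
    exact ⟨x, Subtype.ext hx⟩
  exact0 := by rw [LinearMap.ker_codRestrict]; exact res.exact 0
  exact n := res.exact (n + 1)
  min0 := by rw [LinearMap.ker_codRestrict]; exact res.min 0
  min n := res.min (n + 1)

lemma pd_le_shift_pd_add_one : res.pd ≤ res.shift.pd + 1 := by
  refine iSup₂_le fun n hn => ?_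
  cases n with
  | zero => simp
  | succ m => exact_mod_cast add_le_add_left (res.shift.le_pd hn) 1

lemma shift_pd_le_shift_pd {Γ : Type} [Ring Γ] {N : Type} [AddCommGroup N] [Module Γ N]
    (res' : MinProjRes Γ N) (h : res.pd ≤ res'.pd) : res.shift.pd ≤ res'.shift.pd := by
  refine iSup₂_le fun m hm => res'.shift.le_pd ?_
  by_contra! hQ
  have : Subsingleton (res'.P (m + 1)) := ⟨fun x y => (hQ x).trans (hQ y).symm⟩
  have := (res.le_pd hm).trans (h.trans (res'.pd_le_of_subsingleton (n := m)))
  exact absurd (Nat.cast_le.1 this) (by omega)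

end MinProjRes

namespace ZMod4

lemma two_mem_jacobson : (2 : ZMod 4) ∈ Ring.jacobson (ZMod 4) := by
  rw [← Ideal.jacobson_bot, Ideal.mem_jacobson_bot]
  decide

lemma ideal_eq_bot_or_eq_span_two_or_eq_top (I : Ideal (ZMod 4)) :
    I = ⊥ ∨ I = Ideal.span {2} ∨ I = ⊤ := by
  by_cases hunit : (1 : ZMod 4) ∈ I ∨ (3 : ZMod 4) ∈ I
  · refine Or.inr (Or.inr ?_)
    rcases hunit with h | h
    exacts [I.eq_top_of_isUnit_mem h isUnit_one, I.eq_top_of_isUnit_mem h (by decide)]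
  have hI : ∀ x ∈ I, x = 0 ∨ x = 2 := by
    intro x hx
    have hcases : ∀ y : ZMod 4, y = 0 ∨ y = 1 ∨ y = 2 ∨ y = 3 := by decide
    rcases hcases x with rfl | rfl | rfl | rfl
    exacts [Or.inl rfl, absurd hx (not_or.1 hunit).1, Or.inr rfl, absurd hx (not_or.1 hunit).2]
  by_cases h2 : (2 : ZMod 4) ∈ I
  · refine Or.inr (Or.inl (le_antisymm (fun x hx => ?_) ?_))
    · rcases hI x hx with rfl | rfl
      exacts [zero_mem _, Ideal.mem_span_singleton_self 2]
    · exact (Ideal.span_singleton_le_iff_mem _).2 h2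
  · refine Or.inl (eq_bot_iff.2 fun x hx => ?_)
    rcases hI x hx with rfl | rfl
    exacts [zero_mem _, absurd hx h2]

lemma moduleLength_le_two : ModuleLength (ZMod 4) (ZMod 4) ≤ 2 := by
  refine moduleLength_le_of_surjective ![⊥, Ideal.span {2}, ⊤] fun I => ?_
  rcases ideal_eq_bot_or_eq_span_two_or_eq_top I with rfl | rfl | rfl
  exacts [⟨0, rfl⟩, ⟨1, rfl⟩, ⟨2, rfl⟩]

abbrev mulTwo : ZMod 4 →ₗ[ZMod 4] ZMod 4 := LinearMap.toSpanSingleton _ _ 2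

lemma range_mulTwo : LinearMap.range mulTwo = Ideal.span {2} :=
  (LinearMap.span_singleton_eq_range _ _ _).symm

lemma ker_mulTwo : LinearMap.ker mulTwo = Ideal.span {2} := by
  ext x
  simp only [LinearMap.mem_ker, LinearMap.toSpanSingleton_apply, Ideal.mem_span_singleton']
  revert x
  decide

lemma span_two_le_moduleRad : Ideal.span {2} ≤ ModuleRad (ZMod 4) (ZMod 4) := by
  rw [moduleRad_eq_jacobson_smul_top, Ideal.span_le, Set.singleton_subset_iff]
  simpa using Submodule.smul_mem_smul two_mem_jacobson (Submodule.mem_top (x := (1 : ZMod 4)))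

noncomputable def periodicRes : MinProjRes (ZMod 4) (ZMod 4 ⧸ Ideal.span {(2 : ZMod 4)}) where
  P _ := ZMod 4
  acg _ := inferInstance
  mod _ := inferInstance
  proj _ := inferInstance
  fg _ := inferInstance
  d0 := Submodule.mkQ _
  d _ := mulTwo
  surj := Submodule.mkQ_surjective _
  exact0 := by rw [Submodule.ker_mkQ, range_mulTwo]
  exact _ := by rw [range_mulTwo, ker_mulTwo]
  min0 := by rw [Submodule.ker_mkQ]; exact span_two_le_moduleRad
  min _ := by rw [ker_mulTwo]; exact span_two_le_moduleRad

lemma pd_periodicRes : periodicRes.pd = ⊤ :=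
  ENat.eq_top_iff_forall_ge.2 fun _ =>
    periodicRes.le_pd ⟨(1 : ZMod 4), show (1 : ZMod 4) ≠ 0 by decide⟩

instance : Nontrivial (ZMod 4 ⧸ Ideal.span {(2 : ZMod 4)}) :=
  Ideal.Quotient.nontrivial_iff.2 (by rw [Ne, Ideal.span_singleton_eq_top]; decide)

end ZMod4

theorem MinProjRes.pd_lt_of_moduleLength_lt {r : ℕ} (hr : 0 < r) {Λ : Type} [Ring Λ]
    (hΛ : ∀ (S : Type) [AddCommGroup S] [Module Λ S], IsSimpleModule Λ S →
      ∀ resS : MinProjRes Λ S, resS.pd < r ∨ ModuleLength Λ (resS.P 0) = 2)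
    (n : ℕ) {S : Type} [AddCommGroup S] [Module Λ S] [IsSimpleModule Λ S]
    {Γ : Type} [Ring Γ] {T : Type} [AddCommGroup T] [Module Γ T]
    (resS : MinProjRes Λ S) (resT : MinProjRes Γ T) (hpd : resS.pd ≤ resT.pd)
    (hlen : ModuleLength Γ (resT.P n) < ModuleLength Λ (resS.P n)) :
    resS.pd < n + r := by
  have hpos : ∀ m : ℕ, (0 : ℕ∞) < m + r := fun m =>
    (Nat.cast_pos.2 hr).trans_le le_add_self
  induction n generalizing S T with
  | zero =>
    rcases hΛ S ‹_› resS with hlt | hlen₀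
    · simpa using hlt
    rw [hlen₀] at hlen
    exact (hpd.trans (resT.pd_le_zero_of_moduleLength_lt_two hlen)).trans_lt (hpos 0)
  | succ n ih =>
    rcases hΛ S ‹_› resS with hlt | hlen₀
    · exact hlt.trans_le le_add_self
    have : Nontrivial S := IsSimpleModule.nontrivial Λ S
    by_cases hker : LinearMap.ker resS.d0 = ⊥
    · exact (resS.pd_le_zero_of_ker_eq_bot hker).trans_lt (hpos _)
    have := resS.isSimpleModule_ker_d0 hlen₀.le hker
    have hshift := ih resS.shift resT.shift (resS.shift_pd_le_shift_pd resT hpd) hlen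
    calc resS.pd ≤ resS.shift.pd + 1 := resS.pd_le_shift_pd_add_one
      _ < n + r + 1 := WithTop.add_lt_add_right ENat.one_ne_top hshift
      _ = (n + 1 : ℕ) + r := by push_cast; ring

theorem star_iff_pd_or_len_two_general (r : ℕ) (hr : 0 < r)
    (Λ : Type) [Ring Λ] :
    (∀ (S : Type) [AddCommGroup S] [Module Λ S], IsSimpleModule Λ S →
      ∀ (Γ : Type) [Ring Γ] [IsArtinianRing Γ]
        (T : Type) [AddCommGroup T] [Module Γ T],
        (∃ x : T, x ≠ 0) → Module.Finite Γ T →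
        ∀ (resS : MinProjRes Λ S) (resT : MinProjRes Γ T),
          resS.pd ≤ resT.pd →
          ∀ n : ℕ, ModuleLength Γ (resT.P n) < ModuleLength Λ (resS.P n) →
            resS.pd < (n : ℕ∞) + (r : ℕ∞)) ↔
    (∀ (S : Type) [AddCommGroup S] [Module Λ S], IsSimpleModule Λ S →
      ∀ resS : MinProjRes Λ S,
        resS.pd < (r : ℕ∞) ∨ ModuleLength Λ (resS.P 0) = 2) := by
  constructor
  · intro hb S _ _ hS resS
    refine or_iff_not_imp_left.2 fun hpd => le_antisymm ?_ ?_
    · refine le_trans (not_lt.1 fun hlt => hpd ?_) ZMod4.moduleLength_le_two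
      simpa using hb S hS (ZMod 4) _ (exists_ne 0) inferInstance resS ZMod4.periodicRes
        (ZMod4.pd_periodicRes ▸ le_top) 0 hlt
    · have : Nontrivial S := IsSimpleModule.nontrivial Λ S
      have hker : LinearMap.ker resS.d0 ≠ ⊥ := fun h =>
        hpd ((resS.pd_le_zero_of_ker_eq_bot h).trans_lt (Nat.cast_pos.2 hr))
      exact resS.two_le_moduleLength_P_zero hker
  · intro hc S _ _ _ Γ _ _ T _ _ _ _ resS resT hpd n hlen
    exact MinProjRes.pd_lt_of_moduleLength_lt hr hc n resS resT hpd hlen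

/-- for a fixed `r > 0` and a left artinian ring `Λ`,
condition (b) (comparing minimal projective resolutions of simple `Λ`-modules
with those of arbitrary nonzero finitely generated modules over arbitrary left
artinian rings, via the preorder `≼` with parameter `r`) is equivalent to
condition (c): every simple `Λ`-module has projective dimension `< r` or
projective cover of length `2`. -/
theorem star_iff_pd_or_len_two (r : ℕ) (hr : 0 < r)
    (Λ : Type) [Ring Λ] [IsArtinianRing Λ] :
    (∀ (S : Type) [AddCommGroup S] [Module Λ S], IsSimpleModule Λ S →
      ∀ (Γ : Type) [Ring Γ] [IsArtinianRing Γ]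
        (T : Type) [AddCommGroup T] [Module Γ T],
        (∃ x : T, x ≠ 0) → Module.Finite Γ T →
        ∀ (resS : MinProjRes Λ S) (resT : MinProjRes Γ T),
          resS.pd ≤ resT.pd →
          ∀ n : ℕ, ModuleLength Γ (resT.P n) < ModuleLength Λ (resS.P n) →
            resS.pd < (n : ℕ∞) + (r : ℕ∞)) ↔
    (∀ (S : Type) [AddCommGroup S] [Module Λ S], IsSimpleModule Λ S →
      ∀ resS : MinProjRes Λ S,
        resS.pd < (r : ℕ∞) ∨ ModuleLength Λ (resS.P 0) = 2) :=
  star_iff_pd_or_len_two_general r hr Λ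
end

section
/- Let Λ be a left artinian ring and let Q₁, …, Qₙ be finitely generated indecomposable projective Λ-modules such that every submodule of each Qᵢ is either projective or simple. If M is an indecomposable submodule of the direct sum Q₁ ⊕ ⋯ ⊕ Qₙ, then M is either projective or simple. -/
/-!
Project `M` to the factors. If some projection `M → Qᵢ` has a nonzero projective image, it
splits, and indecomposability of `M` forces it to be an isomorphism onto that image. Otherwise
every image is zero or simple, so `M`, which embeds into the product of the images, is
semisimple; an indecomposable semisimple module is simple.
-/

section Indecomposable

variable {Λ : Type} [Ring Λ] {M : Type} [AddCommGroup M] [Module Λ M]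

theorem IndecomposableModule.eq_bot_or_eq_bot_of_isCompl (hM : IndecomposableModule Λ M)
    {A B : Submodule Λ M} (hAB : IsCompl A B) : A = ⊥ ∨ B = ⊥ := by
  by_contra! h
  exact hM.2 ⟨A, B, h.1, h.2, hAB⟩

theorem IndecomposableModule.isSimpleModule [IsSemisimpleModule Λ M]
    (hM : IndecomposableModule Λ M) : IsSimpleModule Λ M := by
  obtain ⟨x, hx⟩ := hM.1
  have : Nontrivial M := nontrivial_of_ne x 0 hx
  refine (isSimpleModule_iff Λ M).mpr ⟨fun A => ?_⟩
  obtain ⟨B, hAB⟩ := exists_isCompl A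
  rcases hM.eq_bot_or_eq_bot_of_isCompl hAB with hA | rfl
  · exact .inl hA
  · exact .inr (codisjoint_bot.mp hAB.codisjoint)

theorem IndecomposableModule.injective_of_surjective {P : Type*} [AddCommGroup P] [Module Λ P]
    [Module.Projective Λ P] [Nontrivial P] (hM : IndecomposableModule Λ M) {f : M →ₗ[Λ] P}
    (hf : Function.Surjective f) : Function.Injective f := by
  obtain ⟨s, hs⟩ := Module.projective_lifting_property f LinearMap.id hf
  have hidem : IsIdempotentElem (s ∘ₗ f) := by
    change s ∘ₗ (f ∘ₗ s) ∘ₗ f = s ∘ₗ f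
    rw [hs, LinearMap.id_comp]
  rcases hM.eq_bot_or_eq_bot_of_isCompl (LinearMap.IsIdempotentElem.isCompl hidem)
    with hrange | hker
  · -- `s ∘ f = 0` would give `f = f ∘ s ∘ f = 0`, impossible for a surjection onto `P ≠ 0`
    obtain ⟨y, hy⟩ := exists_ne (0 : P)
    obtain ⟨x, rfl⟩ := hf y
    have hsfx : s (f x) = 0 := (Submodule.eq_bot_iff _).mp hrange _ (LinearMap.mem_range_self _ x)
    refine absurd ?_ hy
    simpa [hsfx] using (LinearMap.congr_fun hs (f x)).symm
  · rw [← LinearMap.ker_eq_bot, eq_bot_iff, ← hker]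
    exact LinearMap.ker_le_ker_comp f s

theorem IndecomposableModule.projective_of_range {N : Type*} [AddCommGroup N] [Module Λ N]
    (hM : IndecomposableModule Λ M) (f : M →ₗ[Λ] N) [Module.Projective Λ (LinearMap.range f)]
    (hf : LinearMap.range f ≠ ⊥) : Module.Projective Λ M := by
  have : Nontrivial (LinearMap.range f) := Submodule.nontrivial_iff_ne_bot.mpr hf
  have hsurj := f.surjective_rangeRestrict
  exact .of_equiv (LinearEquiv.ofBijective _ ⟨hM.injective_of_surjective hsurj, hsurj⟩).symm

end Indecomposable

theorem isSemisimpleModule_of_eq_bot_or_isSimpleModule {R M : Type*} [Ring R] [AddCommGroup M]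
    [Module R M] {N : Submodule R M} (hN : N = ⊥ ∨ IsSimpleModule R N) :
    IsSemisimpleModule R N := by
  rcases hN with rfl | hN
  · exact (isSemisimpleModule_iff R _).mpr Subsingleton.instComplementedLattice
  · infer_instance

theorem indec_submodule_of_dsum_general (Λ : Type) [Ring Λ]
    (n : ℕ) (Q : Fin n → Type) [∀ i, AddCommGroup (Q i)] [∀ i, Module Λ (Q i)]
    (hsub : ∀ i (N : Submodule Λ (Q i)),
      Module.Projective Λ ↥N ∨ IsSimpleModule Λ ↥N)
    (M : Submodule Λ (∀ i, Q i)) (hM : IndecomposableModule Λ ↥M) :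
    Module.Projective Λ ↥M ∨ IsSimpleModule Λ ↥M := by
  let p (i : Fin n) : M →ₗ[Λ] Q i := LinearMap.proj i ∘ₗ M.subtype
  by_cases hproj : ∃ i, LinearMap.range (p i) ≠ ⊥ ∧ Module.Projective Λ (LinearMap.range (p i))
  · obtain ⟨i, hne, _⟩ := hproj
    exact .inl (hM.projective_of_range (p i) hne)
  · have hss (i : Fin n) : IsSemisimpleModule Λ (LinearMap.range (p i)) := by
      refine isSemisimpleModule_of_eq_bot_or_isSimpleModule ((hsub i _).imp_left fun hP => ?_)
      by_contra hne
      exact hproj ⟨i, hne, hP⟩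
    have hinj : Function.Injective (LinearMap.pi fun i => (p i).rangeRestrict) :=
      fun x y hxy => Subtype.ext <| funext fun i => congr(($hxy i : Q i))
    have : IsSemisimpleModule Λ M := .of_injective _ hinj
    exact .inr hM.isSimpleModule

/-- an indecomposable submodule of a finite direct sum of
finitely generated indecomposable projective modules, all of whose submodules
are projective or simple, is itself projective or simple. -/
theorem indec_submodule_of_dsum (Λ : Type) [Ring Λ] [IsArtinianRing Λ]
    (n : ℕ) (Q : Fin n → Type) [∀ i, AddCommGroup (Q i)] [∀ i, Module Λ (Q i)]
    (hfg : ∀ i, Module.Finite Λ (Q i)) (hproj : ∀ i, Module.Projective Λ (Q i))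
    (hindec : ∀ i, IndecomposableModule Λ (Q i))
    (hsub : ∀ i (N : Submodule Λ (Q i)),
      Module.Projective Λ ↥N ∨ IsSimpleModule Λ ↥N)
    (M : Submodule Λ (∀ i, Q i)) (hM : IndecomposableModule Λ ↥M) :
    Module.Projective Λ ↥M ∨ IsSimpleModule Λ ↥M :=
  indec_submodule_of_dsum_general Λ n Q hsub M hM
end

section
/- Let Λ be a left artinian ring, let n ≥ 1, and for 1 ≤ i ≤ n let fᵢ : Qᵢ → Qᵢ₋₁ be Λ-linear maps, each nonzero and not an isomorphism, where every Qᵢ (0 ≤ i ≤ n) is a finitely generated indecomposable projective Λ-module of length 2 having a submodule that is not projective. Then: (1) the image of f_{i+1} equals the kernel of fᵢ for 1 ≤ i ≤ n − 1; (2) the cokernel T = Q₀ / im f₁ is a simple nonprojective Λ-module and the kernel of fₙ is a simple nonprojective Λ-module; (3) in any minimal projective resolution (Pₘ, dₘ) of T, the term P_{n+2} is nonzero (so the projective dimension of T is at least n + 2). -/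
/-!
Each `Qᵢ` has exactly one nontrivial submodule `Sᵢ`: by length two, two distinct ones would be
atoms and coatoms at once, hence complements of each other, contradicting indecomposability. So
`Sᵢ` is simple, superfluous in `Qᵢ`, and not projective (it must be the nonprojective submodule),
and a nonzero nonisomorphism `Qᵢ₊₁ → Qᵢ` has kernel `Sᵢ₊₁` and image `Sᵢ`. Thus
`Qₙ → ⋯ → Q₀ → T → 0` starts a projective resolution of `T` with superfluous kernels, and
uniqueness of projective covers identifies the syzygies of every minimal resolution of `T` with the
`Sᵢ`. As `Sₙ` is not projective, `Pₙ₊₁ → Ωⁿ T` is not injective, so `Pₙ₊₂ ≠ 0`.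
-/

open LinearMap Submodule Function

namespace Submodule

variable {R M : Type*} [Ring R] [AddCommGroup M] [Module R M]

def IsSuperfluous (N : Submodule R M) : Prop :=
  ∀ L : Submodule R M, L ⊔ N = ⊤ → L = ⊤

structure IsUniqueNontrivial (S : Submodule R M) : Prop where
  ne_bot : S ≠ ⊥
  ne_top : S ≠ ⊤
  eq_bot_or_eq_or_eq_top : ∀ N : Submodule R M, N = ⊥ ∨ N = S ∨ N = ⊤

theorem isSuperfluous_bot : (⊥ : Submodule R M).IsSuperfluous :=
  fun L h => by rwa [sup_bot_eq] at h

theorem IsSuperfluous.mono {N N' : Submodule R M} (h : N.IsSuperfluous) (hle : N' ≤ N) :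
    N'.IsSuperfluous :=
  fun L hL => h L (eq_top_iff.mpr (hL.ge.trans (sup_le_sup_left hle L)))

theorem isSuperfluous_jacobson [Module.Finite R M] : (Module.jacobson R M).IsSuperfluous := by
  intro L hL
  refine (IsCoatomic.eq_top_or_exists_le_coatom L).resolve_right ?_
  rintro ⟨K, hK, hLK⟩
  have hJK : Module.jacobson R M ≤ K := sInf_le hK
  exact hK.ne_top (eq_top_iff.mpr (hL.ge.trans (sup_le hLK hJK)))

variable {P N : Type*} [AddCommGroup P] [Module R P] [AddCommGroup N] [Module R N]

theorem IsSuperfluous.surjective_of_surjective_comp {p : M →ₗ[R] N} (hp : (ker p).IsSuperfluous)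
    {g : P →ₗ[R] M} (h : Surjective (p ∘ₗ g)) : Surjective g := by
  rw [← range_eq_top]
  refine hp _ ?_
  rw [← comap_map_eq, ← range_comp, range_eq_top.mpr h, comap_top]

end Submodule

section ProjectiveCover

variable {R P Q M : Type*} [Ring R] [AddCommGroup P] [Module R P] [AddCommGroup Q] [Module R Q]
  [AddCommGroup M] [Module R M] [Module.Projective R P] [Module.Projective R Q]

/-- Uniqueness of projective covers: a lift `g : P → Q` of `q` along `p` is surjective because
`ker p` is superfluous, hence split by some `s`, and `s` is surjective because `ker q` is. -/
theorem nonempty_ker_equiv_ker_of_superfluous {p : Q →ₗ[R] M} {q : P →ₗ[R] M}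
    (hp : Surjective p) (hq : Surjective q)
    (hpk : (ker p).IsSuperfluous) (hqk : (ker q).IsSuperfluous) :
    Nonempty (ker q ≃ₗ[R] ker p) := by
  obtain ⟨g, rfl⟩ := Module.projective_lifting_property p q hp
  have hg : Surjective g := hpk.surjective_of_surjective_comp hq
  obtain ⟨s, hs⟩ := Module.projective_lifting_property g LinearMap.id hg
  have hgk : (ker g).IsSuperfluous := hqk.mono (by rw [ker_comp]; exact ker_le_comap g)
  have hs_surj : Surjective s := hgk.surjective_of_surjective_comp (hs ▸ surjective_id)
  have hgs : LeftInverse g s := fun y => congr($hs y)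
  have hg_inj : Injective g := (hgs.rightInverse_of_surjective hs_surj).injective
  let e := LinearEquiv.ofBijective g ⟨hg_inj, hg⟩
  exact ⟨e.ofSubmodules _ _ (by rw [ker_comp]; exact map_comap_eq_of_surjective hg _)⟩

theorem nonempty_ker_equiv_ker_of_range_equiv {A B : Type*} [AddCommGroup A] [Module R A]
    [AddCommGroup B] [Module R B] {d : P →ₗ[R] A} {f : Q →ₗ[R] B}
    (hd : (ker d).IsSuperfluous) (hf : (ker f).IsSuperfluous) (e : range d ≃ₗ[R] range f) :
    Nonempty (ker d ≃ₗ[R] ker f) := by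
  rw [← ker_rangeRestrict d, ← ker_rangeRestrict f, ← LinearEquiv.ker_comp e]
  refine nonempty_ker_equiv_ker_of_superfluous (surjective_rangeRestrict f)
    (e.surjective.comp (surjective_rangeRestrict d)) ?_ ?_
  · rwa [ker_rangeRestrict]
  · rwa [LinearEquiv.ker_comp, ker_rangeRestrict]

end ProjectiveCover

section Radical

variable {Λ : Type} [Ring Λ] {X : Type} [AddCommGroup X] [Module Λ X]

theorem moduleRad_le_jacobson : ModuleRad Λ X ≤ Module.jacobson Λ X := by
  refine span_le.mpr ?_
  rintro _ ⟨r, hr, x, rfl⟩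
  rw [Ideal.jacobson_bot] at hr
  simpa using Module.le_comap_jacobson (toSpanSingleton Λ X x) hr

theorem isSuperfluous_moduleRad [Module.Finite Λ X] : (ModuleRad Λ X).IsSuperfluous :=
  isSuperfluous_jacobson.mono moduleRad_le_jacobson

end Radical

namespace Submodule.IsUniqueNontrivial

variable {R M : Type*} [Ring R] [AddCommGroup M] [Module R M] {S : Submodule R M}

theorem isSimpleModule (hS : S.IsUniqueNontrivial) : IsSimpleModule R S := by
  refine isSimpleModule_iff_isAtom.mpr ⟨hS.ne_bot, fun N hN => ?_⟩
  rcases hS.eq_bot_or_eq_or_eq_top N with rfl | rfl | rfl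
  · rfl
  · exact absurd hN (lt_irrefl _)
  · exact absurd hN (not_lt_of_ge le_top)

theorem isSimpleModule_quotient (hS : S.IsUniqueNontrivial) : IsSimpleModule R (M ⧸ S) := by
  refine isSimpleModule_iff_isCoatom.mpr ⟨hS.ne_top, fun N hN => ?_⟩
  rcases hS.eq_bot_or_eq_or_eq_top N with rfl | rfl | rfl
  · exact absurd hN (not_lt_of_ge bot_le)
  · exact absurd hN (lt_irrefl _)
  · rfl

theorem not_isSimpleModule (hS : S.IsUniqueNontrivial) : ¬ IsSimpleModule R M := fun _ =>
  (eq_bot_or_eq_top S).elim hS.ne_bot hS.ne_top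

theorem isSuperfluous (hS : S.IsUniqueNontrivial) : S.IsSuperfluous := by
  intro L hL
  rcases hS.eq_bot_or_eq_or_eq_top L with rfl | rfl | rfl
  · exact absurd (by rwa [bot_sup_eq] at hL) hS.ne_top
  · exact absurd (by rwa [sup_idem] at hL) hS.ne_top
  · rfl

theorem not_projective [Module.Projective R M] (hS : S.IsUniqueNontrivial)
    (hM : ∃ N : Submodule R M, ¬ Module.Projective R N) : ¬ Module.Projective R S := by
  obtain ⟨N, hN⟩ := hM
  rcases hS.eq_bot_or_eq_or_eq_top N with rfl | rfl | rfl
  · exact absurd (inferInstanceAs (Module.Projective R (⊥ : Submodule R M))) hN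
  · exact hN
  · exact absurd (Module.Projective.of_equiv topEquiv.symm) hN

theorem not_projective_quotient [Module.Projective R M] (hS : S.IsUniqueNontrivial) :
    ¬ Module.Projective R (M ⧸ S) := by
  intro
  obtain ⟨e⟩ := nonempty_ker_equiv_ker_of_superfluous (mkQ_surjective S) surjective_id
    (by rw [ker_mkQ]; exact hS.isSuperfluous) (by rw [ker_id]; exact isSuperfluous_bot)
  have : Subsingleton (ker (LinearMap.id : M ⧸ S →ₗ[R] M ⧸ S)) := by
    rw [ker_id]; infer_instance
  exact hS.ne_bot (ker_mkQ S ▸ subsingleton_iff_eq_bot.mp e.symm.subsingleton)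

variable {N : Type*} [AddCommGroup N] [Module R N] {T : Submodule R N} {f : M →ₗ[R] N}

theorem range_eq (hS : S.IsUniqueNontrivial) (hT : T.IsUniqueNontrivial) (hf : f ≠ 0)
    (hfb : ¬ Bijective f) : range f = T := by
  rcases hT.eq_bot_or_eq_or_eq_top (range f) with h | h | h
  · exact absurd (range_eq_bot.mp h) hf
  · exact h
  · have hsurj : Surjective f := range_eq_top.mp h
    rcases hS.eq_bot_or_eq_or_eq_top (ker f) with hk | hk | hk
    · exact absurd ⟨ker_eq_bot.mp hk, hsurj⟩ hfb
    · have := hS.isSimpleModule_quotient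
      exact absurd (IsSimpleModule.congr (hk ▸ f.quotKerEquivOfSurjective hsurj).symm)
        hT.not_isSimpleModule
    · exact absurd (ker_eq_top.mp hk) hf

theorem ker_eq (hS : S.IsUniqueNontrivial) (hT : T.IsUniqueNontrivial) (hf : f ≠ 0)
    (hfb : ¬ Bijective f) : ker f = S := by
  rcases hS.eq_bot_or_eq_or_eq_top (ker f) with h | h | h
  · have hinj : Injective f := ker_eq_bot.mp h
    have := hT.isSimpleModule
    exact absurd (IsSimpleModule.congr ((LinearEquiv.ofInjective f hinj).trans
      (LinearEquiv.ofEq _ _ (hS.range_eq hT hf hfb)))) hS.not_isSimpleModule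
  · exact h
  · exact absurd (ker_eq_top.mp h) hf

end Submodule.IsUniqueNontrivial

section Length

variable {Λ : Type} [Ring Λ] {X : Type} [AddCommGroup X] [Module Λ X]

theorem three_le_moduleLength {A B : Submodule Λ X} (hA : ⊥ < A) (hAB : A < B) (hB : B < ⊤) :
    3 ≤ ModuleLength Λ X := by
  refine le_iSup₂_of_le (f := fun (n : ℕ) _ => (n : ℕ∞)) 3 ⟨![⊥, A, B, ⊤], ?_, rfl, rfl⟩ le_rfl
  refine Fin.strictMono_iff_lt_succ.mpr fun i => ?_
  fin_cases i
  exacts [hA, hAB, hB]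

theorem exists_bot_lt_lt_top_of_one_lt_moduleLength (h : 1 < ModuleLength Λ X) :
    ∃ A : Submodule Λ X, ⊥ < A ∧ A < ⊤ := by
  obtain ⟨n, ⟨c, hc, hc0, hcn⟩, hn⟩ := lt_biSup_iff.mp h
  have hn : 1 < n := by exact_mod_cast hn
  refine ⟨c ⟨1, by omega⟩, ?_, ?_⟩
  · rw [← hc0]; exact hc (Fin.lt_def.mpr Nat.one_pos)
  · rw [← hcn]; exact hc (Fin.lt_def.mpr hn)

theorem isAtom_of_moduleLength_lt_three (hlen : ModuleLength Λ X < 3) {A : Submodule Λ X}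
    (hA : ⊥ < A) (hA' : A < ⊤) : IsAtom A :=
  ⟨hA.ne', fun _ hC => by_contra fun h =>
    (three_le_moduleLength (bot_lt_iff_ne_bot.mpr h) hC hA').not_gt hlen⟩

theorem isCoatom_of_moduleLength_lt_three (hlen : ModuleLength Λ X < 3) {A : Submodule Λ X}
    (hA : ⊥ < A) (hA' : A < ⊤) : IsCoatom A :=
  ⟨hA'.ne, fun _ hC => by_contra fun h =>
    (three_le_moduleLength hA hC (lt_top_iff_ne_top.mpr h)).not_gt hlen⟩

theorem exists_isUniqueNontrivial (hind : IndecomposableModule Λ X)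
    (hlen : ModuleLength Λ X = 2) : ∃ S : Submodule Λ X, S.IsUniqueNontrivial := by
  have hlen3 : ModuleLength Λ X < 3 := by rw [hlen]; norm_num
  obtain ⟨S, hS, hS'⟩ := exists_bot_lt_lt_top_of_one_lt_moduleLength (by rw [hlen]; norm_num)
  refine ⟨S, hS.ne', hS'.ne, fun N => ?_⟩
  by_contra! hN
  obtain ⟨hN0, hNS, hN1⟩ := hN
  have hN_pos := bot_lt_iff_ne_bot.mpr hN0
  have hN_lt := lt_top_iff_ne_top.mpr hN1
  refine hind.2 ⟨N, S, hN0, hS.ne', ?_, codisjoint_iff.mpr ?_⟩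
  · exact (isAtom_of_moduleLength_lt_three hlen3 hN_pos hN_lt).disjoint_of_ne
      (isAtom_of_moduleLength_lt_three hlen3 hS hS') hNS
  · exact (isCoatom_of_moduleLength_lt_three hlen3 hN_pos hN_lt).sup_eq_top_of_ne
      (isCoatom_of_moduleLength_lt_three hlen3 hS hS') hNS

end Length

namespace MinProjRes

variable {Λ : Type} [Ring Λ] {M : Type} [AddCommGroup M] [Module Λ M]

theorem isSuperfluous_ker_d0 (res : MinProjRes Λ M) : (ker res.d0).IsSuperfluous :=
  have := res.fg 0
  isSuperfluous_moduleRad.mono res.min0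

theorem isSuperfluous_ker_d (res : MinProjRes Λ M) (k : ℕ) : (ker (res.d k)).IsSuperfluous :=
  have := res.fg (k + 1)
  isSuperfluous_moduleRad.mono (res.min k)

theorem exists_ne_zero_of_not_projective_ker (res : MinProjRes Λ M) (k : ℕ)
    (h : ¬ Module.Projective Λ (ker (res.d k))) : ∃ x : res.P (k + 3), x ≠ 0 := by
  have hker : ker (res.d (k + 1)) ≠ ⊥ := by
    intro hbot
    have := res.proj (k + 2)
    exact h (Module.Projective.of_equiv ((LinearEquiv.ofInjective _ (ker_eq_bot.mp hbot)).trans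
      (LinearEquiv.ofEq _ _ (res.exact k))))
  obtain ⟨y, hy, hy0⟩ := (Submodule.ne_bot_iff _).mp hker
  obtain ⟨x, rfl⟩ := (res.exact (k + 1)).ge hy
  exact ⟨x, fun hx => hy0 (by rw [hx, map_zero])⟩

variable {Q : ℕ → Type} [∀ i, AddCommGroup (Q i)] [∀ i, Module Λ (Q i)]
  {f : ∀ i : ℕ, Q (i + 1) →ₗ[Λ] Q i}

theorem nonempty_ker_d_equiv (res : MinProjRes Λ (Q 0 ⧸ range (f 0))) {m : ℕ}
    (hproj : ∀ i ≤ m + 1, Module.Projective Λ (Q i)) (hrange : (range (f 0)).IsSuperfluous)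
    (hker : ∀ i ≤ m, (ker (f i)).IsSuperfluous)
    (hexact : ∀ i < m, range (f (i + 1)) = ker (f i)) :
    ∀ k ≤ m, Nonempty (ker (res.d k) ≃ₗ[Λ] ker (f k)) := by
  intro k hk
  have := res.proj
  induction k with
  | zero =>
    have := hproj 0 (by omega)
    have := hproj 1 (by omega)
    obtain ⟨e⟩ := nonempty_ker_equiv_ker_of_superfluous (mkQ_surjective _) res.surj
      (by rwa [ker_mkQ]) res.isSuperfluous_ker_d0
    exact nonempty_ker_equiv_ker_of_range_equiv (res.isSuperfluous_ker_d 0) (hker 0 hk)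
      ((LinearEquiv.ofEq _ _ res.exact0).trans (e.trans (LinearEquiv.ofEq _ _ (ker_mkQ _))))
  | succ k ih =>
    have := hproj (k + 2) (by omega)
    obtain ⟨e⟩ := ih (by omega)
    exact nonempty_ker_equiv_ker_of_range_equiv (res.isSuperfluous_ker_d (k + 1)) (hker _ hk)
      ((LinearEquiv.ofEq _ _ (res.exact k)).trans
        (e.trans (LinearEquiv.ofEq _ _ (hexact k (by omega)).symm)))

end MinProjRes

theorem path_in_Q_exact_and_pd_general (Λ : Type) [Ring Λ]
    (n : ℕ) (hn : 1 ≤ n)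
    (Q : ℕ → Type) [∀ i, AddCommGroup (Q i)] [∀ i, Module Λ (Q i)]
    (hQ : ∀ i ≤ n, Module.Finite Λ (Q i) ∧ Module.Projective Λ (Q i) ∧
      IndecomposableModule Λ (Q i) ∧ ModuleLength Λ (Q i) = 2 ∧
      ∃ N : Submodule Λ (Q i), ¬ Module.Projective Λ ↥N)
    (f : ∀ i : ℕ, Q (i + 1) →ₗ[Λ] Q i)
    (hf : ∀ i < n, f i ≠ 0 ∧ ¬ Function.Bijective (f i)) :
    (∀ i : ℕ, i + 1 < n →
      LinearMap.range (f (i + 1)) = LinearMap.ker (f i)) ∧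
    (IsSimpleModule Λ (Q 0 ⧸ LinearMap.range (f 0)) ∧
      ¬ Module.Projective Λ (Q 0 ⧸ LinearMap.range (f 0))) ∧
    (IsSimpleModule Λ ↥(LinearMap.ker (f (n - 1))) ∧
      ¬ Module.Projective Λ ↥(LinearMap.ker (f (n - 1)))) ∧
    (∀ res : MinProjRes Λ (Q 0 ⧸ LinearMap.range (f 0)),
      ∃ x : res.P (n + 2), x ≠ 0) := by
  obtain ⟨m, rfl⟩ := Nat.exists_eq_add_of_le' hn
  have hproj i (hi : i ≤ m + 1) := (hQ i hi).2.1
  choose! S hS using fun i (hi : i ≤ m + 1) =>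
    exists_isUniqueNontrivial (hQ i hi).2.2.1 (hQ i hi).2.2.2.1
  have hker i (hi : i ≤ m) : ker (f i) = S (i + 1) :=
    (hS (i + 1) (by omega)).ker_eq (hS i (by omega)) (hf i (by omega)).1 (hf i (by omega)).2
  have hrange i (hi : i ≤ m) : range (f i) = S i :=
    (hS (i + 1) (by omega)).range_eq (hS i (by omega)) (hf i (by omega)).1 (hf i (by omega)).2
  have hexact i (hi : i + 1 < m + 1) : range (f (i + 1)) = ker (f i) := by
    rw [hrange _ (by omega), hker _ (by omega)]
  have hS_np : ¬ Module.Projective Λ (S (m + 1)) :=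
    have := hproj _ le_rfl
    (hS _ le_rfl).not_projective (hQ _ le_rfl).2.2.2.2
  refine ⟨hexact, ?_, ?_, fun res => ?_⟩
  · have := hproj 0 (by omega)
    rw [hrange 0 (by omega)]
    exact ⟨(hS 0 (by omega)).isSimpleModule_quotient, (hS 0 (by omega)).not_projective_quotient⟩
  · rw [Nat.add_sub_cancel, hker m le_rfl]
    exact ⟨(hS _ le_rfl).isSimpleModule, hS_np⟩
  · obtain ⟨e⟩ := res.nonempty_ker_d_equiv hproj
      (hrange 0 (by omega) ▸ (hS 0 (by omega)).isSuperfluous)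
      (fun i hi => hker i hi ▸ (hS (i + 1) (by omega)).isSuperfluous)
      (fun i hi => hexact i (by omega)) m le_rfl
    exact res.exists_ne_zero_of_not_projective_ker m fun _ =>
      hS_np (hker m le_rfl ▸ Module.Projective.of_equiv e)

/-- given a path `Qₙ → ⋯ → Q₀` (here `f i : Q (i+1) → Q i` is the
paper's `f_{i+1}`) of nonzero nonisomorphisms between finitely generated
indecomposable projective modules of length 2 each having a nonprojective
submodule: the path is exact in the middle, the cokernel of `f 0` and the
kernel of `f (n-1)` are simple nonprojective, and `P_{n+2} ≠ 0` in any minimal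
projective resolution of the cokernel `T = Q₀ / im f₁`. -/
theorem path_in_Q_exact_and_pd (Λ : Type) [Ring Λ] [IsArtinianRing Λ]
    (n : ℕ) (hn : 1 ≤ n)
    (Q : ℕ → Type) [∀ i, AddCommGroup (Q i)] [∀ i, Module Λ (Q i)]
    (hQ : ∀ i ≤ n, Module.Finite Λ (Q i) ∧ Module.Projective Λ (Q i) ∧
      IndecomposableModule Λ (Q i) ∧ ModuleLength Λ (Q i) = 2 ∧
      ∃ N : Submodule Λ (Q i), ¬ Module.Projective Λ ↥N)
    (f : ∀ i : ℕ, Q (i + 1) →ₗ[Λ] Q i)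
    (hf : ∀ i < n, f i ≠ 0 ∧ ¬ Function.Bijective (f i)) :
    (∀ i : ℕ, i + 1 < n →
      LinearMap.range (f (i + 1)) = LinearMap.ker (f i)) ∧
    (IsSimpleModule Λ (Q 0 ⧸ LinearMap.range (f 0)) ∧
      ¬ Module.Projective Λ (Q 0 ⧸ LinearMap.range (f 0))) ∧
    (IsSimpleModule Λ ↥(LinearMap.ker (f (n - 1))) ∧
      ¬ Module.Projective Λ ↥(LinearMap.ker (f (n - 1)))) ∧
    (∀ res : MinProjRes Λ (Q 0 ⧸ LinearMap.range (f 0)),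
      ∃ x : res.P (n + 2), x ≠ 0) :=
  path_in_Q_exact_and_pd_general Λ n hn Q hQ f hf
end
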